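/- arXiv:1211.2503 — 5 statements merged into one kernel-verified Lean document; each statement's English description precedes it below -/
import Mathlib

section
/- Let g be a finite-dimensional nilpotent Lie algebra over k whose center z(g) is contained in the derived subalgebra [g, g], and let (π, V) be a finite-dimensional representation of g. Let π_N be a representation of g on V such that for every X in g the endomorphism π_N(X) is the nilpotent part of the Jordan–Chevalley decomposition of π(X) (that is, π(X) − π_N(X) is semisimple, π_N(X) is nilpotent, and the two commute). Then π is injective if and only if π_N is injective. -/
/-!
If `πN` is injective, so is `π`: an `X` with `π X = 0` has `πN X` nilpotent and `-πN X`
semisimple, hence `πN X = 0`.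

Conversely, a nonzero kernel of `πN` is an ideal of the nilpotent Lie algebra `g`, so it contains
a nonzero central `Z`. Then `π Z = π Z - πN Z` is semisimple. As `Z ∈ [g, g]` and `π Z` commutes
with `π g`, every `trace (p(π Z) π Z)` vanishes, which in characteristic zero forces `π Z` to be
nilpotent. So `π Z = 0` and `π` is not injective.
-/

open Module Polynomial

attribute [local instance] LieRing.ofAssociativeRing

/-- Write `minpoly f = X ^ a * q` with `X ∤ q` and `u X ^ (a + 1) + v q = 1`: then
`e = u(f) f ^ (a + 1)` is an idempotent of the form `p(f) f`, so of trace zero, hence `e = 0`;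
and `f ^ (a + 1) = f ^ (a + 1) e`. -/
theorem Module.End.isNilpotent_of_forall_trace_aeval_mul_eq_zero {K V : Type*} [Field K]
    [CharZero K] [AddCommGroup V] [Module K V] [FiniteDimensional K V] (f : End K V)
    (h : ∀ p : K[X], LinearMap.trace K V (aeval f p * f) = 0) : IsNilpotent f := by
  set μ := minpoly K f
  obtain ⟨q, hμ, hq⟩ := exists_eq_pow_rootMultiplicity_mul_and_not_dvd μ
    (minpoly.ne_zero (Algebra.IsIntegral.isIntegral f)) 0
  set a := μ.rootMultiplicity 0
  rw [map_zero, sub_zero] at hμ hq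
  obtain ⟨u, v, huv⟩ := ((irreducible_X.coprime_iff_not_dvd).2 hq).pow_left (m := a + 1)
  have hfμ (r : K[X]) : aeval f (r * X * μ) = 0 := by rw [map_mul, minpoly.aeval, mul_zero]
  have he : IsIdempotentElem (aeval f (u * X ^ (a + 1))) := by
    have : (u * X ^ (a + 1)) * (u * X ^ (a + 1)) = u * X ^ (a + 1) - u * v * X * μ := by
      rw [hμ]; linear_combination (u * X ^ (a + 1)) * huv
    rw [IsIdempotentElem, ← map_mul, this, map_sub, hfμ, sub_zero]
  have he0 : aeval f (u * X ^ (a + 1)) = 0 := by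
    refine (LinearMap.IsIdempotentElem.trace_eq_zero_iff he).1 ?_
    rw [pow_succ, ← mul_assoc, map_mul, aeval_X]
    exact h _
  refine ⟨a + 1, ?_⟩
  have : (X : K[X]) ^ (a + 1) = X ^ (a + 1) * (u * X ^ (a + 1)) + v * X * μ := by
    rw [hμ]; linear_combination (-X ^ (a + 1)) * huv
  rw [← aeval_X_pow (R := K), this, map_add, map_mul, hfμ, he0, mul_zero, add_zero]

theorem LieHom.trace_mul_eq_zero_of_mem_derived {R L M : Type*} [CommRing R] [LieRing L]
    [LieAlgebra R L] [AddCommGroup M] [Module R M] (π : L →ₗ⁅R⁆ End R M) {A : End R M}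
    (hA : ∀ x, Commute A (π x)) {w : L} (hw : w ∈ ⁅(⊤ : LieIdeal R L), (⊤ : LieIdeal R L)⁆) :
    LinearMap.trace R M (A * π w) = 0 := by
  let φ : L →ₗ[R] R := LinearMap.trace R M ∘ₗ LinearMap.mulLeft R A ∘ₗ (π : L →ₗ[R] End R M)
  suffices LieSubmodule.toSubmodule (⁅⊤, ⊤⁆ : LieIdeal R L) ≤ LinearMap.ker φ from this hw
  rw [LieSubmodule.lieIdeal_oper_eq_linear_span', Submodule.span_le]
  rintro - ⟨x, -, y, -, rfl⟩
  have : A * π ⁅x, y⁆ = ⁅A * π x, π y⁆ := by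
    rw [LieHom.map_lie, Ring.lie_def, Ring.lie_def, mul_sub, ← mul_assoc, ← mul_assoc,
      ← mul_assoc (π y), ← (hA y).eq]
  change LinearMap.trace R M (A * π ⁅x, y⁆) = 0
  rw [this, LinearMap.trace_lie]

theorem LieHom.commute_of_mem_center {R L A : Type*} [CommRing R] [LieRing L]
    [LieAlgebra R L] [Ring A] [Algebra R A] (π : L →ₗ⁅R⁆ A) {z : L}
    (hz : z ∈ LieAlgebra.center R L) (x : L) : Commute (π z) (π x) := by
  rw [commute_iff_lie_eq, ← LieHom.map_lie, ← lie_skew, hz x, neg_zero, map_zero]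

theorem LieHom.isNilpotent_of_mem_center_of_mem_derived {K L V : Type*} [Field K] [CharZero K]
    [LieRing L] [LieAlgebra K L] [AddCommGroup V] [Module K V] [FiniteDimensional K V]
    (π : L →ₗ⁅K⁆ End K V) {z : L} (hz : z ∈ LieAlgebra.center K L)
    (hz' : z ∈ ⁅(⊤ : LieIdeal K L), (⊤ : LieIdeal K L)⁆) : IsNilpotent (π z) := by
  refine (π z).isNilpotent_of_forall_trace_aeval_mul_eq_zero fun p => ?_
  have hcomm (x : L) : Commute (aeval (π z) p) (π x) :=
    (Algebra.commute_of_mem_adjoin_singleton_of_commute (aeval_mem_adjoin_singleton K (π z))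
      (π.commute_of_mem_center hz x).symm).symm
  exact π.trace_mul_eq_zero_of_mem_derived hcomm hz'

theorem LieIdeal.exists_ne_zero_mem_center {R L : Type*} [CommRing R] [LieRing L]
    [LieAlgebra R L] [LieRing.IsNilpotent L] {I : LieIdeal R L} (hI : I ≠ ⊥) :
    ∃ z ∈ I, z ∈ LieAlgebra.center R L ∧ z ≠ 0 := by
  have : Nontrivial I := (LieSubmodule.nontrivial_iff_ne_bot R L L).2 hI
  have : LieModule.IsNilpotent L I :=
    Function.Injective.lieModuleIsNilpotent (f := LieHom.id) (g := I.incl.toLinearMap)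
      (fun _ _ => rfl) Subtype.val_injective
  have := LieModule.nontrivial_max_triv_of_isNilpotent R L I
  obtain ⟨⟨z, hz⟩, hz0⟩ := exists_ne (0 : LieModule.maxTrivSubmodule R L I)
  refine ⟨z, z.2, fun x => congrArg Subtype.val (hz x), fun h => hz0 ?_⟩
  ext; exact h

theorem faithful_iff_nilpotent_part_faithful_general
    (k g V : Type*) [Field k] [CharZero k]
    [LieRing g] [LieAlgebra k g] [LieRing.IsNilpotent g]
    [AddCommGroup V] [Module k V] [FiniteDimensional k V]
    (hz : LieAlgebra.center k g ≤ ⁅(⊤ : LieIdeal k g), (⊤ : LieIdeal k g)⁆)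
    (π πN : g →ₗ⁅k⁆ Module.End k V)
    (hdecomp : ∀ X : g, (π X - πN X).IsSemisimple ∧ IsNilpotent (πN X) ∧
      Commute (π X - πN X) (πN X)) :
    Function.Injective π ↔ Function.Injective πN := by
  constructor
  · intro hπ
    rw [← LieHom.ker_eq_bot]
    by_contra hker
    obtain ⟨Z, hZker, hZc, hZ0⟩ := LieIdeal.exists_ne_zero_mem_center hker
    have hss : (π Z).IsSemisimple := by
      simpa [LieHom.mem_ker.1 hZker] using (hdecomp Z).1
    have hnil : IsNilpotent (π Z) := π.isNilpotent_of_mem_center_of_mem_derived hZc (hz hZc)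
    exact hZ0 <| (injective_iff_map_eq_zero π).1 hπ Z <|
      Module.End.eq_zero_of_isNilpotent_isSemisimple hnil hss
  · intro hπN
    rw [injective_iff_map_eq_zero] at hπN ⊢
    intro X hX
    obtain ⟨hss, hnil, -⟩ := hdecomp X
    rw [hX, zero_sub] at hss
    exact hπN X <| neg_eq_zero.1 <| Module.End.eq_zero_of_isNilpotent_isSemisimple hnil.neg hss

/-- If `g` is a finite-dimensional nilpotent Lie algebra with `z(g) ⊆ [g, g]`, `(π, V)` is a
finite-dimensional representation of `g`, and `πN` is a representation of `g` on `V` such that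
each `πN X` is the nilpotent part of the Jordan–Chevalley decomposition of `π X`, then `π` is
injective iff `πN` is injective. -/
theorem faithful_iff_nilpotent_part_faithful
    (k g V : Type*) [Field k] [CharZero k]
    [LieRing g] [LieAlgebra k g] [FiniteDimensional k g] [LieRing.IsNilpotent g]
    [AddCommGroup V] [Module k V] [FiniteDimensional k V]
    (hz : LieAlgebra.center k g ≤ ⁅(⊤ : LieIdeal k g), (⊤ : LieIdeal k g)⁆)
    (π πN : g →ₗ⁅k⁆ Module.End k V)
    (hdecomp : ∀ X : g, (π X - πN X).IsSemisimple ∧ IsNilpotent (πN X) ∧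
      Commute (π X - πN X) (πN X)) :
    Function.Injective π ↔ Function.Injective πN :=
  faithful_iff_nilpotent_part_faithful_general k g V hz π πN hdecomp
end

section
/- Let n ∈ ℕ and let g be a Lie subalgebra of n_n(k) that is isomorphic (as a Lie algebra over k) to L_{5,9}. Then n ≥ 5. -/
attribute [local instance 100] LieRing.ofAssociativeRing

/-- The Lie algebra `n_n(k)` of strictly upper triangular `n × n` matrices over `k`. -/
def strictUpper (k : Type*) [Field k] (n : ℕ) :
    LieSubalgebra k (Matrix (Fin n) (Fin n) k) where
  carrier := {A | ∀ i j : Fin n, j ≤ i → A i j = 0}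
  add_mem' := by
    intro A B hA hB i j hij
    simp [Matrix.add_apply, hA i j hij, hB i j hij]
  zero_mem' := by intro i j hij; simp
  smul_mem' := by
    intro c A hA i j hij
    simp [Matrix.smul_apply, hA i j hij]
  lie_mem' := by
    intro A B hA hB i j hij
    have key : ∀ (X Y : Matrix (Fin n) (Fin n) k),
        (∀ i j : Fin n, j ≤ i → X i j = 0) → (∀ i j : Fin n, j ≤ i → Y i j = 0) →
        (X * Y) i j = 0 := by
      intro X Y hX hY
      rw [Matrix.mul_apply]
      apply Finset.sum_eq_zero
      intro l _
      by_cases h : l ≤ i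
      · rw [hX i l h, zero_mul]
      · push_neg at h
        rw [hY l j (hij.trans h.le), mul_zero]
    have hbr : ⁅A, B⁆ = A * B - B * A := Ring.lie_def A B
    rw [hbr, Matrix.sub_apply, key A B hA hB, key B A hB hA, sub_zero]

/-- A basis of a Lie algebra realizing the bracket table of `L_{5,9}`:
`[X1,X2] = X3`, `[X1,X3] = Z1`, `[X2,X3] = Z2`, all other brackets of basis vectors zero.
Here `X1, X2, X3, Z1, Z2` are `b 0, b 1, b 2, b 3, b 4`. -/
def IsL59Basis {k L : Type*} [Field k] [LieRing L] [LieAlgebra k L]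
    (b : Module.Basis (Fin 5) k L) : Prop :=
  ⁅b 0, b 1⁆ = b 2 ∧ ⁅b 0, b 2⁆ = b 3 ∧ ⁅b 1, b 2⁆ = b 4 ∧
  ⁅b 0, b 3⁆ = 0 ∧ ⁅b 0, b 4⁆ = 0 ∧ ⁅b 1, b 3⁆ = 0 ∧ ⁅b 1, b 4⁆ = 0 ∧
  ⁅b 2, b 3⁆ = 0 ∧ ⁅b 2, b 4⁆ = 0 ∧ ⁅b 3, b 4⁆ = 0

/-! The commutator `⁅A, B⁆` of matrices vanishing below the `a`-th and `b`-th superdiagonals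
vanishes below the `(a + b)`-th. In `L_{5,9}` both `Z1 = ⁅X1, ⁅X1, X2⁆⁆` and `Z2 = ⁅X2, ⁅X1, X2⁆⁆`
are double commutators, so inside `n_n(k)` they vanish below the third superdiagonal. For `n ≤ 4`
at most one entry, `(0, 3)`, lies on or above it, so `Z1` and `Z2` would be linearly dependent. -/

def superdiagSubmodule (R : Type*) [Semiring R] (n d : ℕ) :
    Submodule R (Matrix (Fin n) (Fin n) R) where
  carrier := {X | ∀ i j : Fin n, (j : ℕ) < i + d → X i j = 0}
  add_mem' hX hY i j hij := by simp [hX i j hij, hY i j hij]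
  zero_mem' _ _ _ := rfl
  smul_mem' c X hX i j hij := by simp [hX i j hij]

theorem mul_mem_superdiagSubmodule {R : Type*} [Semiring R] {n a b : ℕ}
    {X Y : Matrix (Fin n) (Fin n) R} (hX : X ∈ superdiagSubmodule R n a)
    (hY : Y ∈ superdiagSubmodule R n b) : X * Y ∈ superdiagSubmodule R n (a + b) := by
  intro i j hij
  rw [Matrix.mul_apply]
  refine Finset.sum_eq_zero fun l _ => ?_
  by_cases hl : (l : ℕ) < i + a
  · rw [hX i l hl, zero_mul]
  · rw [hY l j (by omega), mul_zero]

theorem lie_mem_superdiagSubmodule {R : Type*} [Ring R] {n a b : ℕ}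
    {X Y : Matrix (Fin n) (Fin n) R} (hX : X ∈ superdiagSubmodule R n a)
    (hY : Y ∈ superdiagSubmodule R n b) : ⁅X, Y⁆ ∈ superdiagSubmodule R n (a + b) := by
  rw [Ring.lie_def]
  refine sub_mem (mul_mem_superdiagSubmodule hX hY) ?_
  rw [add_comm]
  exact mul_mem_superdiagSubmodule hY hX

theorem strictUpper_le_superdiagSubmodule_one (k : Type*) [Field k] (n : ℕ) :
    (strictUpper k n).toSubmodule ≤ superdiagSubmodule k n 1 :=
  fun _ hX i j hij => hX i j (Fin.le_iff_val_le_val.mpr (Nat.lt_succ_iff.mp hij))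

theorem finrank_superdiagSubmodule_le (k : Type*) [Field k] (n d : ℕ) :
    Module.finrank k (superdiagSubmodule k n d) ≤
      Fintype.card {p : Fin n × Fin n // (p.1 : ℕ) + d ≤ p.2} := by
  let entries : superdiagSubmodule k n d →ₗ[k] {p : Fin n × Fin n // (p.1 : ℕ) + d ≤ p.2} → k :=
    LinearMap.pi fun p =>
      Matrix.entryLinearMap k k p.1.1 p.1.2 ∘ₗ (superdiagSubmodule k n d).subtype
  have hinj : Function.Injective entries := by
    rw [← LinearMap.ker_eq_bot, LinearMap.ker_eq_bot']
    rintro ⟨X, hX⟩ h0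
    ext i j
    by_cases hij : (j : ℕ) < i + d
    · exact hX i j hij
    · exact congrFun h0 ⟨(i, j), Nat.le_of_not_lt hij⟩
  simpa using LinearMap.finrank_le_finrank_of_injective hinj

theorem finrank_superdiagSubmodule_le_one (k : Type*) [Field k] {n d : ℕ} (h : n ≤ d + 1) :
    Module.finrank k (superdiagSubmodule k n d) ≤ 1 := by
  refine (finrank_superdiagSubmodule_le k n d).trans
    (Fintype.card_le_one_iff_subsingleton.mpr ⟨?_⟩)
  rintro ⟨⟨i, j⟩, hij⟩ ⟨⟨i', j'⟩, hij'⟩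
  have := j.isLt; have := j'.isLt
  simp only at hij hij'
  ext <;> simp only <;> omega

theorem five_le_of_L59_subalgebra_strictUpper_general
    (k : Type*) [Field k] (n : ℕ)
    (g : LieSubalgebra k (Matrix (Fin n) (Fin n) k)) (hg : g ≤ strictUpper k n)
    (b : Module.Basis (Fin 5) k g) (hb : IsL59Basis b) :
    5 ≤ n := by
  by_contra! hn
  obtain ⟨h01, h02, h12, -⟩ := hb
  have hX (i : Fin 5) : (b i : Matrix (Fin n) (Fin n) k) ∈ superdiagSubmodule k n 1 :=
    strictUpper_le_superdiagSubmodule_one k n (hg (b i).2)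
  have hZ1 : (b 3 : Matrix (Fin n) (Fin n) k) ∈ superdiagSubmodule k n 3 := by
    rw [← h02, LieSubalgebra.coe_bracket, ← h01, LieSubalgebra.coe_bracket]
    exact lie_mem_superdiagSubmodule (hX 0) (lie_mem_superdiagSubmodule (hX 0) (hX 1))
  have hZ2 : (b 4 : Matrix (Fin n) (Fin n) k) ∈ superdiagSubmodule k n 3 := by
    rw [← h12, LieSubalgebra.coe_bracket, ← h01, LieSubalgebra.coe_bracket]
    exact lie_mem_superdiagSubmodule (hX 1) (lie_mem_superdiagSubmodule (hX 0) (hX 1))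
  let Z : Fin 2 → superdiagSubmodule k n 3 := ![⟨_, hZ1⟩, ⟨_, hZ2⟩]
  have hZ : LinearIndependent k Z := by
    have hcomp : (superdiagSubmodule k n 3).subtype ∘ Z = g.subtype ∘ b ∘ ![3, 4] := by
      ext i : 1
      fin_cases i <;> rfl
    refine .of_comp (superdiagSubmodule k n 3).subtype ?_
    rw [hcomp]
    exact (b.linearIndependent.comp ![3, 4] (by decide)).map' g.toSubmodule.subtype
      (Submodule.ker_subtype _)
  exact absurd (hZ.fintype_card_le_finrank.trans (finrank_superdiagSubmodule_le_one k (by omega)))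
    (by simp)

/-- If a Lie subalgebra of the strictly upper triangular matrices `n_n(k)` is isomorphic to
`L_{5,9}` (i.e. admits a basis with the `L_{5,9}` bracket table), then `n ≥ 5`. -/
theorem five_le_of_L59_subalgebra_strictUpper
    (k : Type*) [Field k] [CharZero k] (n : ℕ)
    (g : LieSubalgebra k (Matrix (Fin n) (Fin n) k)) (hg : g ≤ strictUpper k n)
    (b : Module.Basis (Fin 5) k g) (hb : IsL59Basis b) :
    5 ≤ n :=
  five_le_of_L59_subalgebra_strictUpper_general k n g hg b hb
end

section
/- Let ε ∈ k. The linear map π_1 from L_{6,19}(ε) to gl(5,k) sending x1·X1 + x2·X2 + x3·X3 + x4·X4 + x5·X5 + z1·Z1 to the strictly upper triangular 5×5 matrix whose nonzero entries are: (1,2)-entry x1, (1,3)-entry x4, (1,4)-entry x5, (1,5)-entry z1, (2,3)-entry x2, (2,4)-entry x3, (3,5)-entry −x2, (4,5)-entry −ε·x3, is an injective Lie algebra homomorphism whose image consists of nilpotent matrices. In particular μ_nil(L_{6,19}(ε)) ≤ 5. -/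
attribute [local instance 100] LieRing.ofAssociativeRing

/-- `mu k g` is the minimal dimension of a faithful representation of `g`, i.e. the least `n`
for which there is an injective Lie algebra homomorphism `g → gl(n, k)`. -/
noncomputable def mu (k : Type*) [Field k] (g : Type*) [LieRing g] [LieAlgebra k g] : ℕ :=
  sInf {n : ℕ | ∃ π : g →ₗ⁅k⁆ Matrix (Fin n) (Fin n) k, Function.Injective π}

/-- `muNil k g` is the minimal dimension of a faithful nilrepresentation of `g`, i.e. the least
`n` for which there is an injective Lie algebra homomorphism `π : g → gl(n, k)` with every
`π X` nilpotent. -/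
noncomputable def muNil (k : Type*) [Field k] (g : Type*) [LieRing g] [LieAlgebra k g] : ℕ :=
  sInf {n : ℕ | ∃ π : g →ₗ⁅k⁆ Matrix (Fin n) (Fin n) k,
    Function.Injective π ∧ ∀ X : g, IsNilpotent (π X)}

/-- A basis of a Lie algebra realizing the bracket table of `L_{6,19}(ε)`:
`[X1,X2] = X4`, `[X1,X3] = X5`, `[X2,X4] = Z1`, `[X3,X5] = ε • Z1`, all other brackets of
basis vectors zero.  Here `X1, ..., X5, Z1` are `b 0, ..., b 4, b 5`. -/
def IsL619Basis {k L : Type*} [Field k] [LieRing L] [LieAlgebra k L] (ε : k)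
    (b : Module.Basis (Fin 6) k L) : Prop :=
  ⁅b 0, b 1⁆ = b 3 ∧ ⁅b 0, b 2⁆ = b 4 ∧ ⁅b 1, b 3⁆ = b 5 ∧ ⁅b 2, b 4⁆ = ε • b 5 ∧
  ⁅b 0, b 3⁆ = 0 ∧ ⁅b 0, b 4⁆ = 0 ∧ ⁅b 0, b 5⁆ = 0 ∧
  ⁅b 1, b 2⁆ = 0 ∧ ⁅b 1, b 4⁆ = 0 ∧ ⁅b 1, b 5⁆ = 0 ∧
  ⁅b 2, b 3⁆ = 0 ∧ ⁅b 2, b 5⁆ = 0 ∧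
  ⁅b 3, b 4⁆ = 0 ∧ ⁅b 3, b 5⁆ = 0 ∧ ⁅b 4, b 5⁆ = 0

/-! The matrices of `π₁` span a space of strictly upper triangular matrices, so they are
nilpotent, and the coordinates of `X` can be read off six entries of `π₁ X`, so `π₁` is
injective. It is a Lie algebra homomorphism because the commutator of two such matrices is the
matrix of the bracket (`L619.lie_pi1`); by bilinearity and antisymmetry it suffices to check this
on the fifteen pairs `b i, b j` with `i < j`, which is the bracket table of `L_{6,19}(ε)`. -/

section

variable {R : Type*} [CommRing R]

theorem Matrix.pow_card_eq_zero_of_isUpperTriangular {n : Type*} [Fintype n] [DecidableEq n]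
    [LinearOrder n] {M : Matrix n n R} (hM : M.IsUpperTriangular) (hdiag : ∀ i, M i i = 0) :
    M ^ Fintype.card n = 0 := by
  have hchar : M.charpoly = Polynomial.X ^ Fintype.card n := by
    simp [M.charpoly_of_isUpperTriangular hM, hdiag]
  simpa [hchar] using M.aeval_self_charpoly

variable {ι L L' : Type*} [LinearOrder ι] [LieRing L] [LieAlgebra R L] [LieRing L'] [LieAlgebra R L']

theorem LinearMap.map_lie_of_basis (f : L →ₗ[R] L') (b : Module.Basis ι R L)
    (h : ∀ i j, i < j → f ⁅b i, b j⁆ = ⁅f (b i), f (b j)⁆) (x y : L) :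
    f ⁅x, y⁆ = ⁅f x, f y⁆ := by
  have hb : ∀ i j, f ⁅b i, b j⁆ = ⁅f (b i), f (b j)⁆ := by
    intro i j
    rcases lt_trichotomy i j with hij | rfl | hji
    · exact h i j hij
    · simp
    · rw [← lie_skew, map_neg, h j i hji, lie_skew]
  have := LinearMap.ext_basis (B := (LieModule.toEnd R L L : L →ₗ[R] L →ₗ[R] L).compr₂ f)
    (B' := ((LieModule.toEnd R L' L' : L' →ₗ[R] L' →ₗ[R] L') ∘ₗ f).compl₂ f) b b hb
  exact LinearMap.congr_fun₂ this x y

end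

namespace L619

variable {k : Type*} [Field k] (ε : k)

/-- `π₁` in the coordinates `(x1, x2, x3, x4, x5, z1) = (x 0, …, x 5)` with respect to
`(X1, …, X5, Z1)`. -/
def pi1 : (Fin 6 → k) →ₗ[k] Matrix (Fin 5) (Fin 5) k where
  toFun x :=
    !![0, x 0, x 3, x 4, x 5;
       0, 0, x 1, x 2, 0;
       0, 0, 0, 0, -x 1;
       0, 0, 0, 0, -(ε * x 2);
       0, 0, 0, 0, 0]
  map_add' x y := by
    ext i j
    fin_cases i <;> fin_cases j <;> simp [add_comm, mul_add]
  map_smul' r x := by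
    ext i j
    fin_cases i <;> fin_cases j <;> simp [mul_left_comm]

theorem pi1_injective : Function.Injective (pi1 ε) := by
  intro x y h
  have h' := fun i j => congrFun (congrFun h i) j
  funext m
  fin_cases m
  · simpa [pi1] using h' 0 1
  · simpa [pi1] using h' 1 2
  · simpa [pi1] using h' 1 3
  · simpa [pi1] using h' 0 2
  · simpa [pi1] using h' 0 3
  · simpa [pi1] using h' 0 4

theorem isNilpotent_pi1 (x : Fin 6 → k) : IsNilpotent (pi1 ε x) := by
  refine ⟨Fintype.card (Fin 5), Matrix.pow_card_eq_zero_of_isUpperTriangular ?_ ?_⟩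
  · intro i j hji
    fin_cases i <;> fin_cases j <;> simp_all [pi1]
  · intro i
    fin_cases i <;> simp [pi1]

theorem lie_pi1 (x y : Fin 6 → k) :
    ⁅pi1 ε x, pi1 ε y⁆ = pi1 ε ![0, 0, 0, x 0 * y 1 - y 0 * x 1, x 0 * y 2 - y 0 * x 2,
      (x 1 * y 3 - x 3 * y 1) + ε * (x 2 * y 4 - x 4 * y 2)] := by
  simp only [Ring.lie_def, pi1, LinearMap.coe_mk, AddHom.coe_mk]
  ext i j
  fin_cases i <;> fin_cases j <;>
    simp only [Matrix.sub_apply, Matrix.mul_apply, Fin.sum_univ_five, Fin.zero_eta, Fin.mk_one,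
      Fin.reduceFinMk, Matrix.of_apply, Matrix.cons_val', Matrix.cons_val, Matrix.empty_val',
      Matrix.cons_val_fin_one, Matrix.cons_val_zero, Matrix.cons_val_one] <;> ring

variable {g : Type*} [LieRing g] [LieAlgebra k g] {b : Module.Basis (Fin 6) k g}

theorem pi1_equivFun_lie (hb : IsL619Basis ε b) (i j : Fin 6) (hij : i < j) :
    pi1 ε (b.equivFun ⁅b i, b j⁆) = ⁅pi1 ε (b.equivFun (b i)), pi1 ε (b.equivFun (b j))⁆ := by
  obtain ⟨h01, h02, h13, h24, h03, h04, h05, h12, h14, h15, h23, h25, h34, h35, h45⟩ := hb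
  rw [lie_pi1]
  congr 1
  fin_cases i <;> fin_cases j <;> simp_all <;> funext m <;> fin_cases m <;> simp

noncomputable def pi1Hom (hb : IsL619Basis ε b) : g →ₗ⁅k⁆ Matrix (Fin 5) (Fin 5) k :=
  { pi1 ε ∘ₗ b.equivFun.toLinearMap with
    map_lie' := (pi1 ε ∘ₗ b.equivFun.toLinearMap).map_lie_of_basis b (pi1_equivFun_lie ε hb) _ _ }

theorem pi1Hom_apply (hb : IsL619Basis ε b) (x : g) : pi1Hom ε hb x = pi1 ε (b.equivFun x) := rfl

theorem pi1Hom_injective (hb : IsL619Basis ε b) : Function.Injective (pi1Hom ε hb) :=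
  (pi1_injective ε).comp b.equivFun.injective

theorem equivFun_linearCombination (x1 x2 x3 x4 x5 z1 : k) :
    b.equivFun (x1 • b 0 + x2 • b 1 + x3 • b 2 + x4 • b 3 + x5 • b 4 + z1 • b 5) =
      ![x1, x2, x3, x4, x5, z1] := by
  funext m
  fin_cases m <;> simp

end L619

theorem muNil_le {k g : Type*} [Field k] [LieRing g] [LieAlgebra k g] {n : ℕ}
    (π : g →ₗ⁅k⁆ Matrix (Fin n) (Fin n) k) (hinj : Function.Injective π)
    (hnil : ∀ X, IsNilpotent (π X)) : muNil k g ≤ n :=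
  Nat.sInf_le ⟨π, hinj, hnil⟩

open L619 in
theorem L619_faithful_nilrep_dim_five_general
    (k g : Type*) [Field k] [LieRing g] [LieAlgebra k g]
    (ε : k) (b : Module.Basis (Fin 6) k g) (hb : IsL619Basis ε b) :
    (∃ π : g →ₗ⁅k⁆ Matrix (Fin 5) (Fin 5) k,
      (∀ x1 x2 x3 x4 x5 z1 : k,
        π (x1 • b 0 + x2 • b 1 + x3 • b 2 + x4 • b 3 + x5 • b 4 + z1 • b 5) =
          !![0, x1, x4, x5, z1;
             0, 0, x2, x3, 0;
             0, 0, 0, 0, -x2;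
             0, 0, 0, 0, -(ε * x3);
             0, 0, 0, 0, 0]) ∧
      Function.Injective π ∧ ∀ X : g, IsNilpotent (π X)) ∧
    muNil k g ≤ 5 := by
  have hnil (X : g) : IsNilpotent (pi1Hom ε hb X) := isNilpotent_pi1 ε _
  refine ⟨⟨pi1Hom ε hb, fun x1 x2 x3 x4 x5 z1 => ?_, pi1Hom_injective ε hb, hnil⟩,
    muNil_le _ (pi1Hom_injective ε hb) hnil⟩
  rw [pi1Hom_apply, equivFun_linearCombination]
  rfl

/-- The explicit linear map `π₁ : L_{6,19}(ε) → gl(5, k)` of the paper is an injective Lie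
algebra homomorphism with nilpotent image; in particular `μ_nil(L_{6,19}(ε)) ≤ 5`. -/
theorem L619_faithful_nilrep_dim_five
    (k g : Type*) [Field k] [CharZero k] [LieRing g] [LieAlgebra k g]
    (ε : k) (b : Module.Basis (Fin 6) k g) (hb : IsL619Basis ε b) :
    (∃ π : g →ₗ⁅k⁆ Matrix (Fin 5) (Fin 5) k,
      (∀ x1 x2 x3 x4 x5 z1 : k,
        π (x1 • b 0 + x2 • b 1 + x3 • b 2 + x4 • b 3 + x5 • b 4 + z1 • b 5) =
          !![0, x1, x4, x5, z1;
             0, 0, x2, x3, 0;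
             0, 0, 0, 0, -x2;
             0, 0, 0, 0, -(ε * x3);
             0, 0, 0, 0, 0]) ∧
      Function.Injective π ∧ ∀ X : g, IsNilpotent (π X)) ∧
    muNil k g ≤ 5 :=
  L619_faithful_nilrep_dim_five_general k g ε b hb
end

section
/- Let g be a 6-dimensional nilpotent Lie algebra over k admitting an injective Lie algebra homomorphism π : g → gl(4,k) such that π(X) is nilpotent for every X ∈ g. Then g is isomorphic as a Lie algebra to n_4(k), the Lie algebra of strictly upper triangular 4×4 matrices over k. -/
/-!
By Engel's theorem the representation makes `k⁴` a nilpotent `g`-module. Hence every proper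
subspace `U` contains the image under `g` of some vector outside `U`: take it in the last term of
the lower central series that is not contained in `U`. Choosing such vectors one after another
gives a basis in which `g` acts by strictly upper triangular matrices, that is, an injective Lie
homomorphism `g → n₄(k)`. Both sides have dimension `6`, so it is an isomorphism.
-/

attribute [local instance 100] LieRing.ofAssociativeRing

open Module Submodule

theorem finrank_strictUpper (k : Type*) [Field k] (n : ℕ) :
    finrank k (strictUpper k n) = n.choose 2 := by
  let e : strictUpper k n ≃ₗ[k] ({p : Fin n × Fin n // p.1 < p.2} → k) :=
    { toFun A p := (A : Matrix (Fin n) (Fin n) k) p.1.1 p.1.2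
      map_add' _ _ := rfl
      map_smul' _ _ := rfl
      invFun f := ⟨Matrix.of fun i j => if h : i < j then f ⟨(i, j), h⟩ else 0,
        fun i j hij => dif_neg hij.not_gt⟩
      left_inv A := by
        ext i j
        by_cases h : i < j
        · simp [h]
        · simp [h, A.2 i j (not_lt.mp h)]
      right_inv f := by
        ext p
        simp [p.2] }
  rw [e.finrank_eq, finrank_pi, Fintype.card_subtype, Fintype.card_product_filter_lt,
    Fintype.card_fin]

section Flag

variable {K V : Type*} [DivisionRing K] [AddCommGroup V] [Module K V]
  {p : Submodule K V → V → Prop}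

theorem exists_linearIndependent_forall_span_image_Iio
    (hp : ∀ U : Submodule K V, U ≠ ⊤ → ∃ v ∉ U, p U v) {m : ℕ} (hm : m ≤ finrank K V) :
    ∃ w : Fin m → V, LinearIndependent K w ∧ ∀ j, p (span K (w '' Set.Iio j)) (w j) := by
  induction m with
  | zero => exact ⟨Fin.elim0, linearIndependent_empty_type, fun j => j.elim0⟩
  | succ m ih =>
    obtain ⟨w, hw, hwp⟩ := ih (by omega)
    have hne : span K (Set.range w) ≠ ⊤ := by
      intro htop
      have hrank := finrank_span_eq_card hw
      rw [htop, finrank_top, Fintype.card_fin] at hrank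
      omega
    obtain ⟨v, hv, hvp⟩ := hp _ hne
    refine ⟨Fin.snoc w v, hw.finSnoc hv, Fin.lastCases ?_ fun j => ?_⟩
    · have hIio : Set.Iio (Fin.last m) = Set.range Fin.castSucc := by
        ext i
        cases i using Fin.lastCases <;> simp
      rw [hIio, ← Set.range_comp, Fin.snoc_comp_castSucc, Fin.snoc_last]
      exact hvp
    · rw [← Fin.image_castSucc_Iio, ← Set.image_comp, Fin.snoc_comp_castSucc, Fin.snoc_castSucc]
      exact hwp j

theorem Module.Basis.exists_forall_flag_castSucc_of_forall_exists_notMem [FiniteDimensional K V]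
    (hp : ∀ U : Submodule K V, U ≠ ⊤ → ∃ v ∉ U, p U v) {n : ℕ} (hn : finrank K V = n) :
    ∃ b : Basis (Fin n) K V, ∀ j, p (b.flag j.castSucc) (b j) := by
  obtain ⟨w, hw, hwp⟩ := exists_linearIndependent_forall_span_image_Iio hp hn.ge
  refine ⟨basisOfLinearIndependentOfCardEqFinrank' w hw (by simp [hn]), fun j => ?_⟩
  simpa [flag, Set.Iio] using hwp j

end Flag

namespace LieModule

variable {R L M : Type*} [CommRing R] [LieRing L] [LieAlgebra R L] [AddCommGroup M] [Module R M]
  [LieRingModule L M] [LieModule R L M]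

theorem exists_notMem_forall_lie_mem [IsNilpotent L M] {U : Submodule R M} (hU : U ≠ ⊤) :
    ∃ v ∉ U, ∀ x : L, ⁅x, v⁆ ∈ U := by
  classical
  have hex : ∃ i, (lowerCentralSeries R L M i : Submodule R M) ≤ U := by
    obtain ⟨t, ht⟩ := IsNilpotent.nilpotent R L M
    exact ⟨t, by simp [ht]⟩
  obtain ⟨i, hi⟩ : ∃ i, Nat.find hex = i + 1 :=
    Nat.exists_eq_succ_of_ne_zero fun h0 => hU <| top_le_iff.mp <| by
      simpa [h0] using Nat.find_spec hex
  obtain ⟨v, hv, hvU⟩ := Set.not_subset.mp (Nat.find_min hex (i.lt_succ_self.trans_eq hi.symm))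
  have hsucc := Nat.find_spec hex
  rw [hi, lowerCentralSeries_succ] at hsucc
  exact ⟨v, hvU, fun x => hsucc <| LieSubmodule.lie_mem_lie (LieSubmodule.mem_top x) hv⟩

end LieModule

theorem LinearMap.toMatrix_mem_strictUpper {K V : Type*} [Field K] [AddCommGroup V] [Module K V]
    {n : ℕ} (b : Basis (Fin n) K V) {f : Module.End K V}
    (hf : ∀ j, f (b j) ∈ b.flag j.castSucc) : LinearMap.toMatrix b b f ∈ strictUpper K n := by
  intro i j hij
  rw [LinearMap.toMatrix_apply]
  exact b.flag_le_ker_coord (Fin.castSucc_le_castSucc_iff.mpr hij) (hf j)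

theorem LieModule.exists_basis_lie_mem_flag {K L M : Type*} [Field K] [LieRing L] [LieAlgebra K L]
    [AddCommGroup M] [Module K M] [LieRingModule L M] [LieModule K L M] [FiniteDimensional K M]
    [LieModule.IsNilpotent L M] {n : ℕ} (hn : finrank K M = n) :
    ∃ b : Basis (Fin n) K M, ∀ j (x : L), ⁅x, b j⁆ ∈ b.flag j.castSucc :=
  Basis.exists_forall_flag_castSucc_of_forall_exists_notMem
    (fun _ hU => LieModule.exists_notMem_forall_lie_mem hU) hn

theorem exists_injective_lieHom_strictUpper {K L : Type*} [Field K] [LieRing L] [LieAlgebra K L]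
    {n : ℕ} (π : L →ₗ⁅K⁆ Matrix (Fin n) (Fin n) K) (hinj : Function.Injective π)
    (hnil : ∀ x, IsNilpotent (π x)) :
    ∃ F : L →ₗ⁅K⁆ strictUpper K n, Function.Injective F := by
  let ρ : L →ₗ⁅K⁆ Module.End K (Fin n → K) := lieEquivMatrix'.symm.toLieHom.comp π
  let _ := LieRingModule.compLieHom (Fin n → K) ρ
  have := LieModule.compLieHom (R := K) (Fin n → K) ρ
  have : LieModule.IsNilpotent L (Fin n → K) :=
    (LieModule.isNilpotent_iff_forall' (R := K)).mpr fun x => (hnil x).map Matrix.toLinAlgEquiv'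
  obtain ⟨b, hb⟩ :=
    LieModule.exists_basis_lie_mem_flag (L := L) (M := Fin n → K) (finrank_fin_fun K)
  let Φ : L →ₗ⁅K⁆ Matrix (Fin n) (Fin n) K :=
    (LinearMap.toMatrixAlgEquiv b).toLieEquiv.toLieHom.comp ρ
  have hΦ : Φ.range ≤ strictUpper K n := by
    rintro _ ⟨x, rfl⟩
    exact LinearMap.toMatrix_mem_strictUpper b (hb · x)
  refine ⟨(LieSubalgebra.inclusion hΦ).comp Φ.rangeRestrict, fun x y hxy => hinj ?_⟩
  exact lieEquivMatrix'.symm.injective ((LinearMap.toMatrixAlgEquiv b).injective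
    (congrArg Subtype.val hxy))

theorem iso_strictUpper_four_of_faithful_nilrep_dim_four_general
    (k g : Type*) [Field k]
    [LieRing g] [LieAlgebra k g]
    (hdim : Module.finrank k g = 6)
    (π : g →ₗ⁅k⁆ Matrix (Fin 4) (Fin 4) k) (hinj : Function.Injective π)
    (hnil : ∀ X : g, IsNilpotent (π X)) :
    Nonempty (g ≃ₗ⁅k⁆ strictUpper k 4) := by
  obtain ⟨F, hF⟩ := exists_injective_lieHom_strictUpper π hinj hnil
  have : FiniteDimensional k g := Module.finite_of_finrank_eq_succ hdim
  have hfinrank : finrank k g = finrank k (strictUpper k 4) := by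
    rw [hdim, finrank_strictUpper]; rfl
  exact ⟨.ofBijective F ⟨hF, (F.toLinearMap.injective_iff_surjective_of_finrank_eq_finrank
    hfinrank).mp hF⟩⟩

/-- A `6`-dimensional nilpotent Lie algebra admitting a faithful nilrepresentation on `k⁴`
is isomorphic to `n_4(k)`, the strictly upper triangular `4 × 4` matrices. -/
theorem iso_strictUpper_four_of_faithful_nilrep_dim_four
    (k g : Type*) [Field k] [CharZero k]
    [LieRing g] [LieAlgebra k g] [FiniteDimensional k g] [LieRing.IsNilpotent g]
    (hdim : Module.finrank k g = 6)
    (π : g →ₗ⁅k⁆ Matrix (Fin 4) (Fin 4) k) (hinj : Function.Injective π)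
    (hnil : ∀ X : g, IsNilpotent (π X)) :
    Nonempty (g ≃ₗ⁅k⁆ strictUpper k 4) :=
  iso_strictUpper_four_of_faithful_nilrep_dim_four_general k g hdim π hinj hnil
end

section
/- Let X1, X2, X3, Z1, Z2 be linearly independent elements of n_5(k) satisfying [X1,X2] = X3, [X1,X3] = Z1, [X2,X3] = Z2, and [Xi, Zj] = 0 for all i ∈ {1,2,3} and j ∈ {1,2}. If X4 ∈ n_5(k) satisfies [Xi, X4] = 0 for i = 1, 2, 3, then X4 lies in the k-linear span of {X1, X2, X3, Z1, Z2}. -/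
attribute [local instance 100] LieRing.ofAssociativeRing

/-!
Write elements of `n_5(k)` through their four diagonals: the brackets in the hypotheses become
polynomial identities between the entries, and the centralizer of `X1, X2` can be computed one
diagonal at a time. Independence of `Z1, Z2` forces their third diagonals `(p1, p2)`, `(q1, q2)`
not both to vanish, which excludes every degenerate position of the superdiagonals `a, b` of
`X1, X2`. Then the superdiagonal of `X4` vanishes, and so does its second diagonal: for generic
`a, b` already because of the third-diagonal entries of `[X1, X4]` and `[X2, X4]`; when
`a1 = b1 = 0` or `a4 = b4 = 0` by comparing the corner entries of `[Xi, X4]` with those of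
`Z1 = [X1, X3]` and `Z2 = [X2, X3]`. Finally, on the span of `E03, E14, E04` the corner entries of
`[X1, X4] = [X2, X4] = 0` cut out a plane, and this plane contains the independent `Z1, Z2`.
-/

theorem Module.Dual.span_range_eq_ker {K V : Type*} [Field K] [AddCommGroup V] [Module K V]
    [FiniteDimensional K V] {n : ℕ} {f : Module.Dual K V} (hf : f ≠ 0)
    (hV : Module.finrank K V = n + 1) {v : Fin n → V} (hv : LinearIndependent K v)
    (hvf : ∀ i, f (v i) = 0) : Submodule.span K (Set.range v) = LinearMap.ker f := by
  refine Submodule.eq_of_le_of_finrank_eq (Submodule.span_le.2 (Set.range_subset_iff.2 hvf)) ?_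
  have := Module.Dual.finrank_ker_add_one_of_ne_zero hf
  rw [finrank_span_eq_card hv, Fintype.card_fin]
  omega

section Coordinates

variable {k : Type*} [CommRing k]

def upper5 (a1 a2 a3 a4 d1 d2 d3 e1 e2 f : k) : Matrix (Fin 5) (Fin 5) k :=
  !![0, a1, d1, e1, f;
     0, 0, a2, d2, e2;
     0, 0, 0, a3, d3;
     0, 0, 0, 0, a4;
     0, 0, 0, 0, 0]

theorem upper5_lie (a1 a2 a3 a4 d1 d2 d3 e1 e2 f b1 b2 b3 b4 g1 g2 g3 n1 n2 h : k) :
    ⁅upper5 a1 a2 a3 a4 d1 d2 d3 e1 e2 f, upper5 b1 b2 b3 b4 g1 g2 g3 n1 n2 h⁆ =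
      upper5 0 0 0 0 (a1*b2 - b1*a2) (a2*b3 - b2*a3) (a3*b4 - b3*a4)
        (a1*g2 + d1*b3 - b1*d2 - g1*a3) (a2*g3 + d2*b4 - b2*d3 - g2*a4)
        (a1*n2 + d1*g3 + e1*b4 - b1*e2 - g1*d3 - n1*a4) := by
  rw [Ring.lie_def]
  ext i j
  simp only [upper5, Matrix.sub_apply, Matrix.mul_apply, Fin.sum_univ_five]
  fin_cases i <;> fin_cases j <;>
    simp only [Fin.zero_eta, Fin.mk_one, Fin.reduceFinMk, Fin.isValue, Matrix.of_apply,
      Matrix.cons_val', Matrix.cons_val_zero, Matrix.cons_val_one, Matrix.cons_val,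
      Matrix.cons_val_fin_one, mul_zero, zero_mul, add_zero, zero_add, sub_self] <;> ring

theorem upper5_eq_zero_iff {a1 a2 a3 a4 d1 d2 d3 e1 e2 f : k} :
    upper5 a1 a2 a3 a4 d1 d2 d3 e1 e2 f = 0 ↔
      a1 = 0 ∧ a2 = 0 ∧ a3 = 0 ∧ a4 = 0 ∧ d1 = 0 ∧ d2 = 0 ∧ d3 = 0 ∧ e1 = 0 ∧ e2 = 0 ∧
        f = 0 := by
  constructor
  · intro h
    have := congrFun₂ h
    exact ⟨this 0 1, this 1 2, this 2 3, this 3 4, this 0 2, this 1 3, this 2 4, this 0 3,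
      this 1 4, this 0 4⟩
  · rintro ⟨rfl, rfl, rfl, rfl, rfl, rfl, rfl, rfl, rfl, rfl⟩
    ext i j
    fin_cases i <;> fin_cases j <;> rfl

theorem smul_upper5_add_smul_upper5 (s t a1 a2 a3 a4 d1 d2 d3 e1 e2 f
    b1 b2 b3 b4 g1 g2 g3 n1 n2 h : k) :
    s • upper5 a1 a2 a3 a4 d1 d2 d3 e1 e2 f + t • upper5 b1 b2 b3 b4 g1 g2 g3 n1 n2 h =
      upper5 (s*a1 + t*b1) (s*a2 + t*b2) (s*a3 + t*b3) (s*a4 + t*b4) (s*d1 + t*g1)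
        (s*d2 + t*g2) (s*d3 + t*g3) (s*e1 + t*n1) (s*e2 + t*n2) (s*f + t*h) := by
  ext i j
  fin_cases i <;> fin_cases j <;> simp [upper5]

end Coordinates

theorem exists_eq_upper5 {k : Type*} [Field k] {A : Matrix (Fin 5) (Fin 5) k}
    (hA : A ∈ strictUpper k 5) :
    ∃ a1 a2 a3 a4 d1 d2 d3 e1 e2 f, A = upper5 a1 a2 a3 a4 d1 d2 d3 e1 e2 f := by
  refine ⟨A 0 1, A 1 2, A 2 3, A 3 4, A 0 2, A 1 3, A 2 4, A 0 3, A 1 4, A 0 4, ?_⟩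
  ext i j
  fin_cases i <;> fin_cases j <;> first | rfl | exact hA _ _ (by decide)

theorem eq_zero_of_mul_eq_zero_of_not_and {M₀ : Type*} [MulZeroClass M₀] [NoZeroDivisors M₀]
    {x y c : M₀} (h : ¬(x = 0 ∧ y = 0))
    (hx : x * c = 0) (hy : y * c = 0) : c = 0 := by
  by_contra hc
  exact h ⟨(mul_eq_zero.1 hx).resolve_right hc, (mul_eq_zero.1 hy).resolve_right hc⟩

section Scalars

variable {k : Type*}
  {a1 a2 a3 a4 b1 b2 b3 b4 c1 c2 c3 d1 d2 d3 e1 e2 g1 g2 g3 n1 n2 r1 r2 p1 p2 q1 q2 z1 z2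
    y1 y2 y3 y4 w1 w2 w3 u1 u2 : k}

section CommRing

variable [CommRing k]

theorem nondegenerate_of_pq_ne_zero (hc1 : c1 = a1*b2 - b1*a2) (hc2 : c2 = a2*b3 - b2*a3)
    (hc3 : c3 = a3*b4 - b3*a4) (hp1 : p1 = a1*c2 - c1*a3) (hp2 : p2 = a2*c3 - c2*a4)
    (hq1 : q1 = b1*c2 - c1*b3) (hq2 : q2 = b2*c3 - c2*b4)
    (hpq : ¬(p1 = 0 ∧ p2 = 0 ∧ q1 = 0 ∧ q2 = 0)) :
    ¬(c1 = 0 ∧ c2 = 0 ∧ c3 = 0) ∧ ¬(a2 = 0 ∧ b2 = 0) ∧ ¬(a3 = 0 ∧ b3 = 0) ∧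
      ¬(a1 = 0 ∧ b1 = 0 ∧ a4 = 0 ∧ b4 = 0) := by
  refine ⟨?_, ?_, ?_, ?_⟩
  · rintro ⟨rfl, rfl, rfl⟩
    exact hpq ⟨by simp [hp1], by simp [hp2], by simp [hq1], by simp [hq2]⟩
  · rintro ⟨rfl, rfl⟩
    exact hpq ⟨by simp [hp1, hc1, hc2], by simp [hp2, hc2], by simp [hq1, hc1, hc2],
      by simp [hq2, hc2]⟩
  · rintro ⟨rfl, rfl⟩
    exact hpq ⟨by simp [hp1, hc2], by simp [hp2, hc2, hc3], by simp [hq1, hc2],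
      by simp [hq2, hc2, hc3]⟩
  · rintro ⟨rfl, rfl, rfl, rfl⟩
    exact hpq ⟨by simp [hp1, hc1], by simp [hp2, hc3], by simp [hq1, hc1], by simp [hq2, hc3]⟩

variable [IsDomain k]

theorem mul_sub_mul_ne_zero_of_indep
    (hind : ∀ α β : k, α*p1 + β*q1 = 0 → α*p2 + β*q2 = 0 → α*z1 + β*z2 = 0 → α = 0 ∧ β = 0)
    (hp2 : p2 = 0) (hq2 : q2 = 0) : p1*z2 - q1*z1 ≠ 0 := by
  intro h
  obtain ⟨hz2, hz1⟩ := hind z2 (-z1) (by linear_combination h) (by rw [hp2, hq2]; ring) (by ring)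
  obtain ⟨hq1, hp1⟩ := hind q1 (-p1) (by ring) (by rw [hp2, hq2]; ring)
    (by rw [hz2, neg_eq_zero.1 hz1]; ring)
  exact one_ne_zero (hind 1 0 (by rw [neg_eq_zero.1 hp1]; ring) (by rw [hp2]; ring)
    (by rw [neg_eq_zero.1 hz1]; ring)).1

theorem mul_sub_mul_eq_zero_of_pq_ne_zero (hpq : ¬(p1 = 0 ∧ p2 = 0 ∧ q1 = 0 ∧ q2 = 0))
    (hap : a1*p2 - p1*a4 = 0) (haq : a1*q2 - q1*a4 = 0)
    (hbp : b1*p2 - p1*b4 = 0) (hbq : b1*q2 - q1*b4 = 0) : a1*b4 - b1*a4 = 0 := by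
  by_contra hD
  refine hpq ⟨?_, ?_, ?_, ?_⟩ <;> refine (mul_eq_zero.1 ?_).resolve_left hD
  · linear_combination b1*hap - a1*hbp
  · linear_combination b4*hap - a4*hbp
  · linear_combination b1*haq - a1*hbq
  · linear_combination b4*haq - a4*hbq

theorem superdiag_eq_zero (hc1 : c1 = a1*b2 - b1*a2) (hc2 : c2 = a2*b3 - b2*a3)
    (hc3 : c3 = a3*b4 - b3*a4) (hc : ¬(c1 = 0 ∧ c2 = 0 ∧ c3 = 0))
    (h2 : ¬(a2 = 0 ∧ b2 = 0)) (h3 : ¬(a3 = 0 ∧ b3 = 0))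
    (ha02 : a1*y2 - y1*a2 = 0) (ha13 : a2*y3 - y2*a3 = 0) (ha24 : a3*y4 - y3*a4 = 0)
    (hb02 : b1*y2 - y1*b2 = 0) (hb13 : b2*y3 - y2*b3 = 0) (hb24 : b3*y4 - y3*b4 = 0) :
    y1 = 0 ∧ y2 = 0 ∧ y3 = 0 ∧ y4 = 0 := by
  -- The last certificate in each block is the Jacobi identity `[c, y] = [a, [b, y]] - [b, [a, y]]`.
  have hy2 : y2 = 0 := by
    by_contra hy
    have hc1z : c1 = 0 :=
      (mul_eq_zero.1 (by linear_combination b2*ha02 - a2*hb02 + y2*hc1)).resolve_right hy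
    have hc2z : c2 = 0 :=
      (mul_eq_zero.1 (by linear_combination b2*ha13 - a2*hb13 + y2*hc2)).resolve_right hy
    refine hc ⟨hc1z, hc2z, (mul_eq_zero.1 ?_).resolve_right hy⟩
    linear_combination y2*hc3 - y4*hc2 + y4*hc2z - (a2*hb24 - a4*hb13 - b2*ha24 + b4*ha13)
  have hy3 : y3 = 0 := by
    by_contra hy
    have hc2z : c2 = 0 :=
      (mul_eq_zero.1 (by linear_combination b3*ha13 - a3*hb13 + y3*hc2)).resolve_right hy
    have hc3z : c3 = 0 :=
      (mul_eq_zero.1 (by linear_combination b3*ha24 - a3*hb24 + y3*hc3)).resolve_right hy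
    refine hc ⟨(mul_eq_zero.1 ?_).resolve_right hy, hc2z, hc3z⟩
    linear_combination y3*hc1 - y1*hc2 + y1*hc2z + (a1*hb13 - a3*hb02 - b1*ha13 + b3*ha02)
  subst hy2 hy3
  exact ⟨eq_zero_of_mul_eq_zero_of_not_and h2 (by linear_combination -ha02)
      (by linear_combination -hb02), rfl, rfl,
    eq_zero_of_mul_eq_zero_of_not_and h3 (by linear_combination ha24) (by linear_combination hb24)⟩

theorem second_diag_eq_zero (hc1 : c1 = a1*b2 - b1*a2) (hc2 : c2 = a2*b3 - b2*a3)
    (hc3 : c3 = a3*b4 - b3*a4) (hc : ¬(c1 = 0 ∧ c2 = 0 ∧ c3 = 0))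
    (h1 : ¬(a1 = 0 ∧ b1 = 0)) (h2 : ¬(a2 = 0 ∧ b2 = 0)) (h3 : ¬(a3 = 0 ∧ b3 = 0))
    (h4 : ¬(a4 = 0 ∧ b4 = 0)) (hD14 : a1*b4 - b1*a4 = 0)
    (ha03 : a1*w2 - w1*a3 = 0) (ha14 : a2*w3 - w2*a4 = 0)
    (hb03 : b1*w2 - w1*b3 = 0) (hb14 : b2*w3 - w2*b4 = 0) :
    w1 = 0 ∧ w2 = 0 ∧ w3 = 0 := by
  by_cases hD13 : a1*b3 - b1*a3 = 0
  · by_cases hD24 : a2*b4 - b2*a4 = 0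
    · -- the minors `D13, D14, D24` of the `2 × 4` matrix `(a; b)` vanish and its columns 1, 4
      -- do not, so its consecutive minors `c1, c2, c3` vanish as well
      have hc1z : c1 = 0 := eq_zero_of_mul_eq_zero_of_not_and h4
        (by linear_combination a2*hD14 - a1*hD24 + a4*hc1)
        (by linear_combination b2*hD14 - b1*hD24 + b4*hc1)
      exact absurd ⟨hc1z,
        eq_zero_of_mul_eq_zero_of_not_and h1
          (by linear_combination a2*hD13 - a3*hc1z + a3*hc1 + a1*hc2)
          (by linear_combination b2*hD13 - b3*hc1z + b3*hc1 + b1*hc2),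
        eq_zero_of_mul_eq_zero_of_not_and h1 (by linear_combination a3*hD14 - a4*hD13 + a1*hc3)
          (by linear_combination b3*hD14 - b4*hD13 + b1*hc3)⟩ hc
    · have hw2 : w2 = 0 :=
        (mul_eq_zero.1 (by linear_combination b2*ha14 - a2*hb14)).resolve_left hD24
      have hw3 : w3 = 0 :=
        (mul_eq_zero.1 (by linear_combination b4*ha14 - a4*hb14)).resolve_left hD24
      subst hw2 hw3
      exact ⟨eq_zero_of_mul_eq_zero_of_not_and h3 (by linear_combination -ha03)
        (by linear_combination -hb03), rfl, rfl⟩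
  · have hw1 : w1 = 0 :=
      (mul_eq_zero.1 (by linear_combination b1*ha03 - a1*hb03)).resolve_left hD13
    have hw2 : w2 = 0 :=
      (mul_eq_zero.1 (by linear_combination b3*ha03 - a3*hb03)).resolve_left hD13
    subst hw1 hw2
    exact ⟨rfl, rfl, eq_zero_of_mul_eq_zero_of_not_and h2 (by linear_combination ha14)
      (by linear_combination hb14)⟩

theorem second_diag_eq_zero_of_a4_b4_eq_zero (ha4 : a4 = 0) (hb4 : b4 = 0)
    (hc3 : c3 = a3*b4 - b3*a4) (hp1 : p1 = a1*c2 - c1*a3) (hq1 : q1 = b1*c2 - c1*b3)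
    (hz1 : z1 = a1*r2 + d1*c3 - c1*d3 - r1*a4) (hz2 : z2 = b1*r2 + g1*c3 - c1*g3 - r1*b4)
    (h1 : ¬(a1 = 0 ∧ b1 = 0)) (h2 : ¬(a2 = 0 ∧ b2 = 0)) (hΔ : p1*z2 - q1*z1 ≠ 0)
    (ha03 : a1*w2 - w1*a3 = 0) (ha14 : a2*w3 - w2*a4 = 0)
    (hb03 : b1*w2 - w1*b3 = 0) (hb14 : b2*w3 - w2*b4 = 0)
    (ha04 : a1*u2 + d1*w3 - w1*d3 - u1*a4 = 0) (hb04 : b1*u2 + g1*w3 - w1*g3 - u1*b4 = 0) :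
    w1 = 0 ∧ w2 = 0 ∧ w3 = 0 := by
  subst ha4 hb4
  have hw3 : w3 = 0 := eq_zero_of_mul_eq_zero_of_not_and h2 (by linear_combination ha14)
    (by linear_combination hb14)
  have hc3z : c3 = 0 := by rw [hc3]; ring
  subst hw3 hc3z
  -- `w1 • (p1, q1)` and `w1 • (z1, z2)` are both multiples of `(a1, b1)`
  have hwp : w1*p1 = a1*(c2*w1 - c1*w2) := by linear_combination w1*hp1 + c1*ha03
  have hwq : w1*q1 = b1*(c2*w1 - c1*w2) := by linear_combination w1*hq1 + c1*hb03
  have hwz1 : w1*z1 = a1*(r2*w1 - c1*u2) := by linear_combination w1*hz1 + c1*ha04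
  have hwz2 : w1*z2 = b1*(r2*w1 - c1*u2) := by linear_combination w1*hz2 + c1*hb04
  have hw1 : w1 = 0 := by
    have hdet : w1^2 * (p1*z2 - q1*z1) = 0 := by
      rw [show w1^2 * (p1*z2 - q1*z1) = (w1*p1)*(w1*z2) - (w1*q1)*(w1*z1) by ring,
        hwp, hwq, hwz1, hwz2]
      ring
    exact pow_eq_zero_iff two_ne_zero |>.1 <| (mul_eq_zero.1 hdet).resolve_right hΔ
  subst hw1
  exact ⟨rfl, eq_zero_of_mul_eq_zero_of_not_and h1 (by linear_combination ha03)
    (by linear_combination hb03), rfl⟩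

theorem second_diag_eq_zero_of_a1_b1_eq_zero (ha1 : a1 = 0) (hb1 : b1 = 0)
    (hc1 : c1 = a1*b2 - b1*a2) (hp2 : p2 = a2*c3 - c2*a4) (hq2 : q2 = b2*c3 - c2*b4)
    (hz1 : z1 = a1*r2 + d1*c3 - c1*d3 - r1*a4) (hz2 : z2 = b1*r2 + g1*c3 - c1*g3 - r1*b4)
    (h3 : ¬(a3 = 0 ∧ b3 = 0)) (h4 : ¬(a4 = 0 ∧ b4 = 0)) (hΔ : p2*z2 - q2*z1 ≠ 0)
    (ha03 : a1*w2 - w1*a3 = 0) (ha14 : a2*w3 - w2*a4 = 0)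
    (hb03 : b1*w2 - w1*b3 = 0) (hb14 : b2*w3 - w2*b4 = 0)
    (ha04 : a1*u2 + d1*w3 - w1*d3 - u1*a4 = 0) (hb04 : b1*u2 + g1*w3 - w1*g3 - u1*b4 = 0) :
    w1 = 0 ∧ w2 = 0 ∧ w3 = 0 := by
  subst ha1 hb1
  have hw1 : w1 = 0 := eq_zero_of_mul_eq_zero_of_not_and h3 (by linear_combination -ha03)
    (by linear_combination -hb03)
  have hc1z : c1 = 0 := by rw [hc1]; ring
  subst hw1 hc1z
  -- `w3 • (p2, q2)` and `w3 • (z1, z2)` are both multiples of `(a4, b4)`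
  have hwp : w3*p2 = a4*(c3*w2 - c2*w3) := by linear_combination w3*hp2 + c3*ha14
  have hwq : w3*q2 = b4*(c3*w2 - c2*w3) := by linear_combination w3*hq2 + c3*hb14
  have hwz1 : w3*z1 = a4*(c3*u1 - r1*w3) := by linear_combination w3*hz1 + c3*ha04
  have hwz2 : w3*z2 = b4*(c3*u1 - r1*w3) := by linear_combination w3*hz2 + c3*hb04
  have hw3 : w3 = 0 := by
    have hdet : w3^2 * (p2*z2 - q2*z1) = 0 := by
      rw [show w3^2 * (p2*z2 - q2*z1) = (w3*p2)*(w3*z2) - (w3*q2)*(w3*z1) by ring,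
        hwp, hwq, hwz1, hwz2]
      ring
    exact pow_eq_zero_iff two_ne_zero |>.1 <| (mul_eq_zero.1 hdet).resolve_right hΔ
  subst hw3
  exact ⟨rfl, eq_zero_of_mul_eq_zero_of_not_and h4 (by linear_combination -ha14)
    (by linear_combination -hb14), rfl⟩

end CommRing

variable [Field k]

theorem exists_eq_combination_of_mul_sub_mul_eq_zero {s t : k} (v : k) (hst : ¬(s = 0 ∧ t = 0))
    (hind : ∀ α β : k, α*p1 + β*q1 = 0 → α*p2 + β*q2 = 0 → α*z1 + β*z2 = 0 → α = 0 ∧ β = 0)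
    (hp : s*p2 - p1*t = 0) (hq : s*q2 - q1*t = 0) (hu : s*u2 - u1*t = 0) :
    ∃ α β : k, u1 = α*p1 + β*q1 ∧ u2 = α*p2 + β*q2 ∧ v = α*z1 + β*z2 := by
  let f : Module.Dual k (Fin 3 → k) := s • LinearMap.proj 1 - t • LinearMap.proj 0
  have hf : f ≠ 0 := by
    intro hf
    refine hst ⟨?_, ?_⟩
    · simpa [f] using LinearMap.congr_fun hf (Pi.single 1 1)
    · simpa [f] using LinearMap.congr_fun hf (Pi.single 0 1)
  have hli : LinearIndependent k ![![p1, p2, z1], ![q1, q2, z2]] := by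
    refine LinearIndependent.pair_iff.2 fun α β h => hind α β ?_ ?_ ?_
    · simpa using congr_fun h 0
    · simpa using congr_fun h 1
    · simpa using congr_fun h 2
  have hmem : ![u1, u2, v] ∈ Submodule.span k (Set.range ![![p1, p2, z1], ![q1, q2, z2]]) := by
    rw [Module.Dual.span_range_eq_ker hf (by simp) hli]
    · simpa [f, mul_comm t] using hu
    · intro i
      fin_cases i
      · simpa [f, mul_comm t] using hp
      · simpa [f, mul_comm t] using hq
  obtain ⟨c, hc⟩ := (Submodule.mem_span_range_iff_exists_fun k).1 hmem
  refine ⟨c 0, c 1, ?_, ?_, ?_⟩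
  · simpa [eq_comm] using congr_fun hc 0
  · simpa [eq_comm] using congr_fun hc 1
  · simpa [eq_comm] using congr_fun hc 2

/-- The coordinates are `X1 = upper5 a d e _`, `X2 = upper5 b g n _`, `X3 = upper5 0 c r _`,
`Z1 = upper5 0 0 (p1, p2, z1)`, `Z2 = upper5 0 0 (q1, q2, z2)` and `X4 = upper5 y w u v`;
`haij`, `hbij` are the `(i, j)` entries of `[X1, X4] = 0`, `[X2, X4] = 0`, and `hind` is the
independence of `Z1, Z2`. -/
theorem centralizer_coords_mem_span (v : k)
    (hc1 : c1 = a1*b2 - b1*a2) (hc2 : c2 = a2*b3 - b2*a3) (hc3 : c3 = a3*b4 - b3*a4)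
    (hp1 : p1 = a1*c2 - c1*a3) (hp2 : p2 = a2*c3 - c2*a4)
    (hq1 : q1 = b1*c2 - c1*b3) (hq2 : q2 = b2*c3 - c2*b4)
    (hz1 : z1 = a1*r2 + d1*c3 - c1*d3 - r1*a4) (hz2 : z2 = b1*r2 + g1*c3 - c1*g3 - r1*b4)
    (hind : ∀ α β : k, α*p1 + β*q1 = 0 → α*p2 + β*q2 = 0 → α*z1 + β*z2 = 0 → α = 0 ∧ β = 0)
    (hap : a1*p2 - p1*a4 = 0) (haq : a1*q2 - q1*a4 = 0)
    (hbp : b1*p2 - p1*b4 = 0) (hbq : b1*q2 - q1*b4 = 0)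
    (ha02 : a1*y2 - y1*a2 = 0) (ha13 : a2*y3 - y2*a3 = 0) (ha24 : a3*y4 - y3*a4 = 0)
    (ha03 : a1*w2 + d1*y3 - y1*d2 - w1*a3 = 0) (ha14 : a2*w3 + d2*y4 - y2*d3 - w2*a4 = 0)
    (ha04 : a1*u2 + d1*w3 + e1*y4 - y1*e2 - w1*d3 - u1*a4 = 0)
    (hb02 : b1*y2 - y1*b2 = 0) (hb13 : b2*y3 - y2*b3 = 0) (hb24 : b3*y4 - y3*b4 = 0)
    (hb03 : b1*w2 + g1*y3 - y1*g2 - w1*b3 = 0) (hb14 : b2*w3 + g2*y4 - y2*g3 - w2*b4 = 0)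
    (hb04 : b1*u2 + g1*w3 + n1*y4 - y1*n2 - w1*g3 - u1*b4 = 0) :
    y1 = 0 ∧ y2 = 0 ∧ y3 = 0 ∧ y4 = 0 ∧ w1 = 0 ∧ w2 = 0 ∧ w3 = 0 ∧
      ∃ α β : k, u1 = α*p1 + β*q1 ∧ u2 = α*p2 + β*q2 ∧ v = α*z1 + β*z2 := by
  have hpq : ¬(p1 = 0 ∧ p2 = 0 ∧ q1 = 0 ∧ q2 = 0) := fun ⟨h1, h2, h3, h4⟩ =>
    mul_sub_mul_ne_zero_of_indep hind h2 h4 (by rw [h1, h3]; ring)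
  obtain ⟨hc, h2, h3, hM⟩ := nondegenerate_of_pq_ne_zero hc1 hc2 hc3 hp1 hp2 hq1 hq2 hpq
  have hD14 := mul_sub_mul_eq_zero_of_pq_ne_zero hpq hap haq hbp hbq
  obtain ⟨rfl, rfl, rfl, rfl⟩ :=
    superdiag_eq_zero hc1 hc2 hc3 hc h2 h3 ha02 ha13 ha24 hb02 hb13 hb24
  simp only [mul_zero, zero_mul, add_zero, sub_zero] at ha03 ha14 ha04 hb03 hb14 hb04
  have hw : w1 = 0 ∧ w2 = 0 ∧ w3 = 0 := by
    by_cases h1 : a1 = 0 ∧ b1 = 0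
    · have hc1z : c1 = 0 := by rw [hc1, h1.1, h1.2]; ring
      exact second_diag_eq_zero_of_a1_b1_eq_zero h1.1 h1.2 hc1 hp2 hq2 hz1 hz2 h3
        (fun h4 => hM ⟨h1.1, h1.2, h4⟩)
        (mul_sub_mul_ne_zero_of_indep (fun α β h h' h'' => hind α β h' h h'')
          (by rw [hp1, hc1z, h1.1]; ring) (by rw [hq1, hc1z, h1.2]; ring))
        ha03 ha14 hb03 hb14 ha04 hb04
    by_cases h4 : a4 = 0 ∧ b4 = 0
    · have hc3z : c3 = 0 := by rw [hc3, h4.1, h4.2]; ring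
      exact second_diag_eq_zero_of_a4_b4_eq_zero h4.1 h4.2 hc3 hp1 hq1 hz1 hz2 h1 h2
        (mul_sub_mul_ne_zero_of_indep hind (by rw [hp2, hc3z, h4.1]; ring)
          (by rw [hq2, hc3z, h4.2]; ring))
        ha03 ha14 hb03 hb14 ha04 hb04
    exact second_diag_eq_zero hc1 hc2 hc3 hc h1 h2 h3 h4 hD14 ha03 ha14 hb03 hb14
  obtain ⟨rfl, rfl, rfl⟩ := hw
  simp only [mul_zero, zero_mul, add_zero, sub_zero] at ha04 hb04
  refine ⟨rfl, rfl, rfl, rfl, rfl, rfl, rfl, ?_⟩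
  by_cases ha : a1 = 0 ∧ a4 = 0
  · exact exists_eq_combination_of_mul_sub_mul_eq_zero v
      (fun hb => hM ⟨ha.1, hb.1, ha.2, hb.2⟩) hind hbp hbq hb04
  · exact exists_eq_combination_of_mul_sub_mul_eq_zero v ha hind hap haq ha04

end Scalars

theorem centralizer_mem_span_L59_general
    (k : Type*) [Field k]
    (X1 X2 X3 Z1 Z2 X4 : Matrix (Fin 5) (Fin 5) k)
    (hX1 : X1 ∈ strictUpper k 5) (hX2 : X2 ∈ strictUpper k 5)
    (hX4 : X4 ∈ strictUpper k 5)
    (hli : LinearIndependent k ![X1, X2, X3, Z1, Z2])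
    (h12 : ⁅X1, X2⁆ = X3) (h13 : ⁅X1, X3⁆ = Z1) (h23 : ⁅X2, X3⁆ = Z2)
    (h1Z1 : ⁅X1, Z1⁆ = 0) (h1Z2 : ⁅X1, Z2⁆ = 0)
    (h2Z1 : ⁅X2, Z1⁆ = 0) (h2Z2 : ⁅X2, Z2⁆ = 0)
    (hc1 : ⁅X1, X4⁆ = 0) (hc2 : ⁅X2, X4⁆ = 0) :
    X4 ∈ Submodule.span k ({X1, X2, X3, Z1, Z2} : Set (Matrix (Fin 5) (Fin 5) k)) := by
  have hZ : LinearIndependent k ![Z1, Z2] := by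
    convert hli.comp ![3, 4] (by decide) using 1
    ext i; fin_cases i <;> rfl
  refine Submodule.span_mono (s := {Z1, Z2}) (by simp [Set.insert_subset_iff])
    (Submodule.mem_span_pair.2 ?_)
  subst h12 h13 h23
  obtain ⟨a1, a2, a3, a4, d1, d2, d3, e1, e2, f1, rfl⟩ := exists_eq_upper5 hX1
  obtain ⟨b1, b2, b3, b4, g1, g2, g3, n1, n2, f2, rfl⟩ := exists_eq_upper5 hX2
  obtain ⟨y1, y2, y3, y4, w1, w2, w3, u1, u2, v, rfl⟩ := exists_eq_upper5 hX4
  rw [LinearIndependent.pair_iff] at hZ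
  simp only [upper5_lie, smul_upper5_add_smul_upper5, upper5_eq_zero_iff, mul_zero, zero_mul,
    add_zero, sub_zero, true_and, and_imp] at h1Z1 h1Z2 h2Z1 h2Z2 hc1 hc2 hZ
  obtain ⟨ha02, ha13, ha24, ha03, ha14, ha04⟩ := hc1
  obtain ⟨hb02, hb13, hb24, hb03, hb14, hb04⟩ := hc2
  obtain ⟨rfl, rfl, rfl, rfl, rfl, rfl, rfl, α, β, rfl, rfl, rfl⟩ :=
    centralizer_coords_mem_span v rfl rfl rfl rfl rfl rfl rfl rfl rfl hZ h1Z1 h1Z2 h2Z1 h2Z2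
      ha02 ha13 ha24 ha03 ha14 ha04 hb02 hb13 hb24 hb03 hb14 hb04
  refine ⟨α, β, ?_⟩
  simp only [upper5_lie, smul_upper5_add_smul_upper5, mul_zero, zero_mul, add_zero, sub_zero]

/-- If `X1, X2, X3, Z1, Z2 ∈ n_5(k)` are linearly independent with `[X1,X2] = X3`,
`[X1,X3] = Z1`, `[X2,X3] = Z2` and `[Xi, Zj] = 0`, and `X4 ∈ n_5(k)` commutes with
`X1, X2, X3`, then `X4` lies in the span of `X1, X2, X3, Z1, Z2`. -/
theorem centralizer_mem_span_L59
    (k : Type*) [Field k] [CharZero k]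
    (X1 X2 X3 Z1 Z2 X4 : Matrix (Fin 5) (Fin 5) k)
    (hX1 : X1 ∈ strictUpper k 5) (hX2 : X2 ∈ strictUpper k 5) (hX3 : X3 ∈ strictUpper k 5)
    (hZ1 : Z1 ∈ strictUpper k 5) (hZ2 : Z2 ∈ strictUpper k 5) (hX4 : X4 ∈ strictUpper k 5)
    (hli : LinearIndependent k ![X1, X2, X3, Z1, Z2])
    (h12 : ⁅X1, X2⁆ = X3) (h13 : ⁅X1, X3⁆ = Z1) (h23 : ⁅X2, X3⁆ = Z2)
    (h1Z1 : ⁅X1, Z1⁆ = 0) (h1Z2 : ⁅X1, Z2⁆ = 0)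
    (h2Z1 : ⁅X2, Z1⁆ = 0) (h2Z2 : ⁅X2, Z2⁆ = 0)
    (h3Z1 : ⁅X3, Z1⁆ = 0) (h3Z2 : ⁅X3, Z2⁆ = 0)
    (hc1 : ⁅X1, X4⁆ = 0) (hc2 : ⁅X2, X4⁆ = 0) (hc3 : ⁅X3, X4⁆ = 0) :
    X4 ∈ Submodule.span k ({X1, X2, X3, Z1, Z2} : Set (Matrix (Fin 5) (Fin 5) k)) :=
  centralizer_mem_span_L59_general k X1 X2 X3 Z1 Z2 X4 hX1 hX2 hX4 hli h12 h13 h23 h1Z1 h1Z2 h2Z1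
    h2Z2 hc1 hc2
end
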